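/- arXiv:1309.0706 — 3 statements merged into one kernel-verified Lean document; each statement's English description precedes it below -/
import Mathlib

section
/- In a pre-Abstract Krivine Structure, for all t, s ∈ Λ and π ∈ Π: if ts ⊥ π then S(K(SKK))t ⊥ s·π (the Sη rule holds for E = S(K(SKK))). -/
/-! With `I = SKK`, the process `S(KI)t ⋆ s·π` head-reduces to `KI ⋆ s·ts·π`, then to
`I ⋆ ts·π` and finally to `ts ⋆ π`; each reduction step is a backward closure of `⊥`
obtained from (S1)–(S3). -/

section HeadReduction

variable {Lam Stk : Type*} {perp : Lam → Stk → Prop} {push : Lam → Stk → Stk}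
  {app : Lam → Lam → Lam} {K S : Lam}

theorem perp_K_app (hS1 : ∀ t s π, perp t (push s π) → perp (app t s) π)
    (hS2 : ∀ t π, perp t π → ∀ s, perp K (push t (push s π)))
    {t : Lam} {π : Stk} (h : perp t π) (s : Lam) :
    perp (app K t) (push s π) :=
  hS1 _ _ _ (hS2 t π h s)

theorem perp_S_app_app (hS1 : ∀ t s π, perp t (push s π) → perp (app t s) π)
    (hS3 : ∀ t s u π, perp (app (app t u) (app s u)) π →
      perp S (push t (push s (push u π))))
    {t s u : Lam} {π : Stk} (h : perp (app (app t u) (app s u)) π) :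
    perp (app (app S t) s) (push u π) :=
  hS1 _ _ _ (hS1 _ _ _ (hS3 t s u π h))

theorem perp_SKK (hS1 : ∀ t s π, perp t (push s π) → perp (app t s) π)
    (hS2 : ∀ t π, perp t π → ∀ s, perp K (push t (push s π)))
    (hS3 : ∀ t s u π, perp (app (app t u) (app s u)) π →
      perp S (push t (push s (push u π))))
    {t : Lam} {π : Stk} (h : perp t π) :
    perp (app (app S K) K) (push t π) :=
  perp_S_app_app hS1 hS3 (hS1 _ _ _ (perp_K_app hS1 hS2 h _))

end HeadReduction

/-- The Sη rule: if `ts ⊥ π` then `S(K(SKK))t ⊥ s·π`, in any pre-AKS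
satisfying (S1)–(S3). -/
theorem S_eta_rule {Lam Stk : Type*} (perp : Lam → Stk → Prop)
    (push : Lam → Stk → Stk) (app : Lam → Lam → Lam) (K S : Lam)
    (hS1 : ∀ t s π, perp t (push s π) → perp (app t s) π)
    (hS2 : ∀ t π, perp t π → ∀ s, perp K (push t (push s π)))
    (hS3 : ∀ t s u π, perp (app (app t u) (app s u)) π →
      perp S (push t (push s (push u π))))
    (t s : Lam) (π : Stk) (h : perp (app t s) π) :
    perp (app (app S (app K (app (app S K) K))) t) (push s π) := by
  have hI : perp (app (app S K) K) (push (app t s) π) := perp_SKK hS1 hS2 hS3 h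
  have hKI : perp (app (app K (app (app S K) K)) s) (push (app t s) π) :=
    hS1 _ _ _ (perp_K_app hS1 hS2 hI s)
  exact perp_S_app_app hS1 hS3 (hS1 _ _ _ hKI)
end

section
/- Let A be an OCA with implication, adjunctor and filter Φ. There is a function H : A × A → A with H(Φ,Φ) ⊆ Φ such that for all a,b,c,m,n ∈ A: if m((na)b) ≤ c then H(m,n)a ≤ (b → c). -/
/-! With the composition combinator `B`, `B f g x ≤ f (g x)`, take `H(m,n) = B e (B (B m) n)`.
Then `H(m,n) a ≤ e (B m (n a))`, and `B m (n a) b ≤ m ((n a) b) ≤ c`, so the adjunctor gives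
`e (B m (n a)) ≤ (b → c)`. -/

section CompositionCombinator

variable {A : Type*} (ap : A → A → A) (k s : A)

/-- The composition combinator `B = S(KS)K`. -/
def combB : A := ap (ap s (ap k s)) k

theorem combB_ap_ap_ap_le [Preorder A]
    (hmono : ∀ a a' b b', a ≤ a' → b ≤ b' → ap a b ≤ ap a' b')
    (hk : ∀ a b, ap (ap k a) b ≤ a)
    (hs : ∀ a b c, ap (ap (ap s a) b) c ≤ ap (ap a c) (ap b c)) (f g x : A) :
    ap (ap (ap (combB ap k s) f) g) x ≤ ap f (ap g x) := by
  have hBf : ap (combB ap k s) f ≤ ap s (ap k f) :=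
    calc ap (combB ap k s) f ≤ ap (ap (ap k s) f) (ap k f) := hs _ _ _
      _ ≤ ap s (ap k f) := hmono _ _ _ _ (hk _ _) le_rfl
  calc ap (ap (ap (combB ap k s) f) g) x ≤ ap (ap (ap s (ap k f)) g) x :=
        hmono _ _ _ _ (hmono _ _ _ _ hBf le_rfl) le_rfl
    _ ≤ ap (ap (ap k f) x) (ap g x) := hs _ _ _
    _ ≤ ap f (ap g x) := hmono _ _ _ _ (hk _ _) le_rfl

theorem combB_mem {Φ : Set A} (hΦap : ∀ f ∈ Φ, ∀ g ∈ Φ, ap f g ∈ Φ)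
    (hkΦ : k ∈ Φ) (hsΦ : s ∈ Φ) : combB ap k s ∈ Φ :=
  hΦap _ (hΦap _ hsΦ _ (hΦap _ hkΦ _ hsΦ)) _ hkΦ

end CompositionCombinator

theorem exists_H_general {A : Type*} [PartialOrder A] (ap : A → A → A) (k s : A)
    (arrow : A → A → A) (e : A)
    (hmono : ∀ a a' b b', a ≤ a' → b ≤ b' → ap a b ≤ ap a' b')
    (hk : ∀ a b, ap (ap k a) b ≤ a)
    (hs : ∀ a b c, ap (ap (ap s a) b) c ≤ ap (ap a c) (ap b c))
    (hadj : ∀ a b c, ap a b ≤ c → ap e a ≤ arrow b c)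
    (Φ : Set A)
    (hΦap : ∀ f ∈ Φ, ∀ g ∈ Φ, ap f g ∈ Φ)
    (hkΦ : k ∈ Φ) (hsΦ : s ∈ Φ) (heΦ : e ∈ Φ) :
    ∃ H : A → A → A, (∀ m ∈ Φ, ∀ n ∈ Φ, H m n ∈ Φ) ∧
      ∀ a b c m n : A, ap m (ap (ap n a) b) ≤ c → ap (H m n) a ≤ arrow b c := by
  set B := combB ap k s
  have hB : ∀ f g x, ap (ap (ap B f) g) x ≤ ap f (ap g x) :=
    combB_ap_ap_ap_le ap k s hmono hk hs
  have hBΦ : B ∈ Φ := combB_mem ap k s hΦap hkΦ hsΦ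
  refine ⟨fun m n => ap (ap B e) (ap (ap B (ap B m)) n), ?_, ?_⟩
  · intro m hm n hn
    exact hΦap _ (hΦap _ hBΦ _ heΦ) _ (hΦap _ (hΦap _ hBΦ _ (hΦap _ hBΦ _ hm)) _ hn)
  · intro a b c m n h
    calc ap (ap (ap B e) (ap (ap B (ap B m)) n)) a
        ≤ ap e (ap (ap (ap B (ap B m)) n) a) := hB _ _ _
      _ ≤ ap e (ap (ap B m) (ap n a)) := hmono _ _ _ _ le_rfl (hB _ _ _)
      _ ≤ arrow b c := hadj _ _ _ ((hB _ _ _).trans h)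

/-- There is `H : A × A → A` preserving the filter such that
`m((na)b) ≤ c → H(m,n)a ≤ (b → c)`. -/
theorem exists_H {A : Type*} [PartialOrder A] (ap : A → A → A) (k s : A)
    (arrow : A → A → A) (e : A)
    (hmono : ∀ a a' b b', a ≤ a' → b ≤ b' → ap a b ≤ ap a' b')
    (hk : ∀ a b, ap (ap k a) b ≤ a)
    (hs : ∀ a b c, ap (ap (ap s a) b) c ≤ ap (ap a c) (ap b c))
    (hhalf : ∀ a b c, a ≤ arrow b c → ap a b ≤ c)
    (harrmono : ∀ a a' b b', a' ≤ a → b ≤ b' → arrow a b ≤ arrow a' b')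
    (hadj : ∀ a b c, ap a b ≤ c → ap e a ≤ arrow b c)
    (Φ : Set A)
    (hΦap : ∀ f ∈ Φ, ∀ g ∈ Φ, ap f g ∈ Φ)
    (hkΦ : k ∈ Φ) (hsΦ : s ∈ Φ) (heΦ : e ∈ Φ) :
    ∃ H : A → A → A, (∀ m ∈ Φ, ∀ n ∈ Φ, H m n ∈ Φ) ∧
      ∀ a b c m n : A, ap m (ap (ap n a) b) ≤ c → ap (H m n) a ≤ arrow b c :=
  exists_H_general ap k s arrow e hmono hk hs hadj Φ hΦap hkΦ hsΦ heΦ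
end

section
/- Let A be an OCA with implication, adjunctor and filter Φ, and I a set. Define on A^I the entailment order φ ⊢ ψ iff ∃f ∈ Φ, ∀i ∈ I, f·φ(i) ≤ ψ(i), pointwise meet (φ∧ψ)(i) = p·φ(i)·ψ(i), and pointwise arrow (φ→ψ)(i) = φ(i)→ψ(i). Then for all φ, ψ, θ ∈ A^I: φ ∧ ψ ⊢ θ if and only if φ ⊢ (ψ → θ). -/
/-!
The combinators `k` and `s` realize, inside `Φ`, the composition `B = s (k s) k`, with
`B a b c ≤ a (b c)`. From it, a realizer `f` of `φ ∧ ψ ⊢ θ` is curried to `B (B f) p`, whose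
value at `φ i` is turned into an element below `ψ i → θ i` by the adjunctor `e`; conversely,
a realizer `f` of `φ ⊢ ψ → θ` is uncurried to `s (B f p₁) p₂`, and the half adjunction
evaluates `f (φ i)` at `ψ i`.
-/

section Combinators

variable {A : Type*} {ap : A → A → A} {k s : A}

def compose (ap : A → A → A) (k s : A) : A := ap (ap s (ap k s)) k

theorem compose_mem {Φ : Set A} (hΦap : ∀ f ∈ Φ, ∀ g ∈ Φ, ap f g ∈ Φ)
    (hkΦ : k ∈ Φ) (hsΦ : s ∈ Φ) : compose ap k s ∈ Φ :=
  hΦap _ (hΦap _ hsΦ _ (hΦap _ hkΦ _ hsΦ)) _ hkΦ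

variable [Preorder A]

theorem compose_ap_ap_ap_le (hmono : ∀ a a' b b', a ≤ a' → b ≤ b' → ap a b ≤ ap a' b')
    (hk : ∀ a b, ap (ap k a) b ≤ a)
    (hs : ∀ a b c, ap (ap (ap s a) b) c ≤ ap (ap a c) (ap b c)) (a b c : A) :
    ap (ap (ap (compose ap k s) a) b) c ≤ ap a (ap b c) :=
  calc ap (ap (ap (compose ap k s) a) b) c
      ≤ ap (ap (ap (ap (ap k s) a) (ap k a)) b) c :=
        hmono _ _ _ _ (hmono _ _ _ _ (hs _ _ _) le_rfl) le_rfl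
    _ ≤ ap (ap (ap s (ap k a)) b) c :=
        hmono _ _ _ _ (hmono _ _ _ _ (hmono _ _ _ _ (hk _ _) le_rfl) le_rfl) le_rfl
    _ ≤ ap (ap (ap k a) c) (ap b c) := hs _ _ _
    _ ≤ ap a (ap b c) := hmono _ _ _ _ (hk _ _) le_rfl

variable {Φ : Set A} (hmono : ∀ a a' b b', a ≤ a' → b ≤ b' → ap a b ≤ ap a' b')
    (hk : ∀ a b, ap (ap k a) b ≤ a)
    (hs : ∀ a b c, ap (ap (ap s a) b) c ≤ ap (ap a c) (ap b c))
    (hΦap : ∀ f ∈ Φ, ∀ g ∈ Φ, ap f g ∈ Φ) (hkΦ : k ∈ Φ) (hsΦ : s ∈ Φ)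

include hmono hk hs hΦap hkΦ hsΦ

theorem exists_curry {p c : A} (hpΦ : p ∈ Φ) (hcΦ : c ∈ Φ) :
    ∃ d ∈ Φ, ∀ a b, ap (ap d a) b ≤ ap c (ap (ap p a) b) := by
  set B := compose ap k s
  have hBΦ : B ∈ Φ := compose_mem hΦap hkΦ hsΦ
  refine ⟨ap (ap B (ap B c)) p, hΦap _ (hΦap _ hBΦ _ (hΦap _ hBΦ _ hcΦ)) _ hpΦ, fun a b => ?_⟩
  calc ap (ap (ap (ap B (ap B c)) p) a) b
      ≤ ap (ap (ap B c) (ap p a)) b := hmono _ _ _ _ (compose_ap_ap_ap_le hmono hk hs _ _ _) le_rfl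
    _ ≤ ap c (ap (ap p a) b) := compose_ap_ap_ap_le hmono hk hs _ _ _

theorem exists_uncurry {p p₁ p₂ c : A} (hp₁Φ : p₁ ∈ Φ) (hp₂Φ : p₂ ∈ Φ)
    (hp₁ : ∀ a b, ap p₁ (ap (ap p a) b) ≤ a) (hp₂ : ∀ a b, ap p₂ (ap (ap p a) b) ≤ b)
    (hcΦ : c ∈ Φ) : ∃ d ∈ Φ, ∀ a b, ap d (ap (ap p a) b) ≤ ap (ap c a) b := by
  set B := compose ap k s
  have hBΦ : B ∈ Φ := compose_mem hΦap hkΦ hsΦ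
  refine ⟨ap (ap s (ap (ap B c) p₁)) p₂,
    hΦap _ (hΦap _ hsΦ _ (hΦap _ (hΦap _ hBΦ _ hcΦ) _ hp₁Φ)) _ hp₂Φ, fun a b => ?_⟩
  set z := ap (ap p a) b
  calc ap (ap (ap s (ap (ap B c) p₁)) p₂) z
      ≤ ap (ap (ap (ap B c) p₁) z) (ap p₂ z) := hs _ _ _
    _ ≤ ap (ap c (ap p₁ z)) (ap p₂ z) :=
        hmono _ _ _ _ (compose_ap_ap_ap_le hmono hk hs _ _ _) le_rfl
    _ ≤ ap (ap c a) b := hmono _ _ _ _ (hmono _ _ _ _ le_rfl (hp₁ _ _)) (hp₂ _ _)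

end Combinators

theorem entail_adjunction_general {A : Type*} [PartialOrder A] (ap : A → A → A) (k s : A)
    (arrow : A → A → A) (e : A) (p p₁ p₂ : A)
    (hmono : ∀ a a' b b', a ≤ a' → b ≤ b' → ap a b ≤ ap a' b')
    (hk : ∀ a b, ap (ap k a) b ≤ a)
    (hs : ∀ a b c, ap (ap (ap s a) b) c ≤ ap (ap a c) (ap b c))
    (hhalf : ∀ a b c, a ≤ arrow b c → ap a b ≤ c)
    (hadj : ∀ a b c, ap a b ≤ c → ap e a ≤ arrow b c)
    (Φ : Set A)
    (hΦap : ∀ f ∈ Φ, ∀ g ∈ Φ, ap f g ∈ Φ)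
    (hkΦ : k ∈ Φ) (hsΦ : s ∈ Φ) (heΦ : e ∈ Φ)
    (hpΦ : p ∈ Φ) (hp₁Φ : p₁ ∈ Φ) (hp₂Φ : p₂ ∈ Φ)
    (hp₁ : ∀ a b, ap p₁ (ap (ap p a) b) ≤ a)
    (hp₂ : ∀ a b, ap p₂ (ap (ap p a) b) ≤ b)
    {I : Type*} (φ ψ θ : I → A) :
    (∃ f ∈ Φ, ∀ i, ap f (ap (ap p (φ i)) (ψ i)) ≤ θ i) ↔
    (∃ f ∈ Φ, ∀ i, ap f (φ i) ≤ arrow (ψ i) (θ i)) := by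
  constructor
  · rintro ⟨f, hfΦ, hf⟩
    obtain ⟨g, hgΦ, hg⟩ := exists_curry hmono hk hs hΦap hkΦ hsΦ hpΦ hfΦ
    have hBΦ := compose_mem hΦap hkΦ hsΦ
    refine ⟨ap (ap (compose ap k s) e) g, hΦap _ (hΦap _ hBΦ _ heΦ) _ hgΦ, fun i => ?_⟩
    exact (compose_ap_ap_ap_le hmono hk hs _ _ _).trans
      (hadj _ _ _ ((hg _ _).trans (hf i)))
  · rintro ⟨f, hfΦ, hf⟩
    obtain ⟨g, hgΦ, hg⟩ := exists_uncurry hmono hk hs hΦap hkΦ hsΦ hp₁Φ hp₂Φ hp₁ hp₂ hfΦ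
    exact ⟨g, hgΦ, fun i => (hg _ _).trans (hhalf _ _ _ (hf i))⟩

/-- Adjunction for the entailment order on `A^I`:
`φ ∧ ψ ⊢ θ ↔ φ ⊢ (ψ → θ)`. -/
theorem entail_adjunction {A : Type*} [PartialOrder A] (ap : A → A → A) (k s : A)
    (arrow : A → A → A) (e : A) (p p₁ p₂ : A)
    (hmono : ∀ a a' b b', a ≤ a' → b ≤ b' → ap a b ≤ ap a' b')
    (hk : ∀ a b, ap (ap k a) b ≤ a)
    (hs : ∀ a b c, ap (ap (ap s a) b) c ≤ ap (ap a c) (ap b c))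
    (hhalf : ∀ a b c, a ≤ arrow b c → ap a b ≤ c)
    (harrmono : ∀ a a' b b', a' ≤ a → b ≤ b' → arrow a b ≤ arrow a' b')
    (hadj : ∀ a b c, ap a b ≤ c → ap e a ≤ arrow b c)
    (Φ : Set A)
    (hΦap : ∀ f ∈ Φ, ∀ g ∈ Φ, ap f g ∈ Φ)
    (hkΦ : k ∈ Φ) (hsΦ : s ∈ Φ) (heΦ : e ∈ Φ)
    (hpΦ : p ∈ Φ) (hp₁Φ : p₁ ∈ Φ) (hp₂Φ : p₂ ∈ Φ)
    (hp₁ : ∀ a b, ap p₁ (ap (ap p a) b) ≤ a)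
    (hp₂ : ∀ a b, ap p₂ (ap (ap p a) b) ≤ b)
    {I : Type*} (φ ψ θ : I → A) :
    (∃ f ∈ Φ, ∀ i, ap f (ap (ap p (φ i)) (ψ i)) ≤ θ i) ↔
    (∃ f ∈ Φ, ∀ i, ap f (φ i) ≤ arrow (ψ i) (θ i)) :=
  entail_adjunction_general ap k s arrow e p p₁ p₂ hmono hk hs hhalf hadj Φ hΦap hkΦ hsΦ heΦ hpΦ
    hp₁Φ hp₂Φ hp₁ hp₂ φ ψ θ
end
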